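/- arXiv:2511.23116 — 4 statements merged into one kernel-verified Lean document; each statement's English description precedes it below -/
import Mathlib

section
/- Let I, J be finite sets and let values Φ̃_{ij} = Φ_{x_i y_j} + ε_{i y_j} + η_{x_i j} be separable across finite type sets X, Y. If π̃ : I × J → ℝ≥0 solves the individual-level optimal assignment linear program max Σ_{ij} π̃_{ij}(Φ̃_{ij} − ε_{i0} − η_{0j}) subject to Σ_j π̃_{ij} ≤ 1 for all i and Σ_i π̃_{ij} ≤ 1 for all j, then the aggregated variables π_{iy} = Σ_{j : y_j = y} π̃_{ij}, π_{xj} = Σ_{i : x_i = x} π̃_{ij}, π_{i0} = 1 − Σ_j π̃_{ij}, π_{0j} = 1 − Σ_i π̃_{ij} solve the type-aggregated linear program max Σ_i [π_{i0} ε_{i0} + Σ_y π_{iy} α_{iy}] + Σ_j [π_{0j} η_{0j} + Σ_x π_{xj} γ_{xj}] subject to π_{i0} + Σ_y π_{iy} = 1, π_{0j} + Σ_x π_{xj} = 1, and the balance conditions Σ_{i : x_i = x} π_{iy} = Σ_{j : y_j = y} π_{xj} for all (x,y), where α_{iy} = Φ_{x_i y}/2 + ε_{iy} and γ_{xj} =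 Φ_{x y_j}/2 + η_{xj}. -/
open Finset

/-- Summing `σ j * f (ym j)` over all `j` equals summing fiber totals times `f y`. -/
lemma fiber_sum_mul {J Y : Type*} [Fintype J] [Fintype Y] [DecidableEq Y]
    (ym : J → Y) (σ : J → ℝ) (f : Y → ℝ) :
    ∑ j, σ j * f (ym j)
      = ∑ y, (∑ j ∈ univ.filter (fun j => ym j = y), σ j) * f y := by
  rw [← Finset.sum_fiberwise univ ym (fun j => σ j * f (ym j))]
  refine Finset.sum_congr rfl fun y _ => ?_
  rw [Finset.sum_mul]
  exact Finset.sum_congr rfl fun j hj => by rw [(Finset.mem_filter.mp hj).2]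

/-- Key accounting identity: if the fiber sums of `σ` are `A` and `B`, then the
type-aggregated objective of `(A, B)` equals the individual objective of `σ`
plus the constant `∑ ε0 + ∑ η0`. -/
lemma agg_obj_eq {I J X Y : Type*} [Fintype I] [Fintype J] [Fintype X] [Fintype Y]
    [DecidableEq X] [DecidableEq Y]
    (xm : I → X) (ym : J → Y)
    (Φ : X → Y → ℝ) (ε : I → Y → ℝ) (ε0 : I → ℝ)
    (η : X → J → ℝ) (η0 : J → ℝ)
    (σ : I → J → ℝ) (A : I → Y → ℝ) (B : X → J → ℝ)
    (hA : ∀ i y, ∑ j ∈ univ.filter (fun j => ym j = y), σ i j = A i y)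
    (hB : ∀ x j, ∑ i ∈ univ.filter (fun i => xm i = x), σ i j = B x j) :
    ∑ i, ((1 - ∑ j, σ i j) * ε0 i + ∑ y, A i y * (Φ (xm i) y / 2 + ε i y))
      + ∑ j, ((1 - ∑ i, σ i j) * η0 j + ∑ x, B x j * (Φ x (ym j) / 2 + η x j))
    = (∑ i, ∑ j, σ i j * ((Φ (xm i) (ym j) + ε i (ym j) + η (xm i) j) - ε0 i - η0 j))
      + ∑ i, ε0 i + ∑ j, η0 j := by
  have h1 : ∀ i, ∑ y, A i y * (Φ (xm i) y / 2 + ε i y)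
      = ∑ j, σ i j * (Φ (xm i) (ym j) / 2 + ε i (ym j)) := by
    intro i
    rw [fiber_sum_mul ym (σ i) (fun y => Φ (xm i) y / 2 + ε i y)]
    exact Finset.sum_congr rfl fun y _ => by rw [hA]
  have h2 : ∀ j, ∑ x, B x j * (Φ x (ym j) / 2 + η x j)
      = ∑ i, σ i j * (Φ (xm i) (ym j) / 2 + η (xm i) j) := by
    intro j
    rw [fiber_sum_mul xm (fun i => σ i j) (fun x => Φ x (ym j) / 2 + η x j)]
    exact Finset.sum_congr rfl fun x _ => by rw [hB]
  simp only [h1, h2]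
  have key : ∀ i j, σ i j * ((Φ (xm i) (ym j) + ε i (ym j) + η (xm i) j) - ε0 i - η0 j)
      = σ i j * (Φ (xm i) (ym j) / 2 + ε i (ym j))
        + σ i j * (Φ (xm i) (ym j) / 2 + η (xm i) j)
        - σ i j * ε0 i - σ i j * η0 j := fun i j => by ring
  have A1 : ∑ i, ((1 - ∑ j, σ i j) * ε0 i
        + ∑ j, σ i j * (Φ (xm i) (ym j) / 2 + ε i (ym j)))
      = ∑ i, ε0 i - ∑ i, ∑ j, σ i j * ε0 i
        + ∑ i, ∑ j, σ i j * (Φ (xm i) (ym j) / 2 + ε i (ym j)) := by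
    simp only [sub_mul, one_mul, Finset.sum_mul, Finset.sum_add_distrib,
      Finset.sum_sub_distrib]
  have A2 : ∑ j, ((1 - ∑ i, σ i j) * η0 j
        + ∑ i, σ i j * (Φ (xm i) (ym j) / 2 + η (xm i) j))
      = ∑ j, η0 j - ∑ j, ∑ i, σ i j * η0 j
        + ∑ j, ∑ i, σ i j * (Φ (xm i) (ym j) / 2 + η (xm i) j) := by
    simp only [sub_mul, one_mul, Finset.sum_mul, Finset.sum_add_distrib,
      Finset.sum_sub_distrib]
  have A3 : (∑ i, ∑ j, σ i j * ((Φ (xm i) (ym j) + ε i (ym j) + η (xm i) j) - ε0 i - η0 j))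
      = ∑ i, ∑ j, σ i j * (Φ (xm i) (ym j) / 2 + ε i (ym j))
        + ∑ i, ∑ j, σ i j * (Φ (xm i) (ym j) / 2 + η (xm i) j)
        - ∑ i, ∑ j, σ i j * ε0 i - ∑ i, ∑ j, σ i j * η0 j := by
    simp only [key, Finset.sum_add_distrib, Finset.sum_sub_distrib]
  have A4 : ∑ j, ∑ i, σ i j * η0 j = ∑ i, ∑ j, σ i j * η0 j := Finset.sum_comm
  have A5 : ∑ j, ∑ i, σ i j * (Φ (xm i) (ym j) / 2 + η (xm i) j)
      = ∑ i, ∑ j, σ i j * (Φ (xm i) (ym j) / 2 + η (xm i) j) := Finset.sum_comm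
  rw [A1, A2, A3, A4, A5]
  ring

/-- If π̃ solves the individual-level optimal assignment LP under
separability, the aggregated variables solve the type-aggregated LP. -/
theorem stmt0
    {I J X Y : Type*} [Fintype I] [Fintype J] [Fintype X] [Fintype Y]
    [DecidableEq X] [DecidableEq Y]
    (xm : I → X) (ym : J → Y)
    (Φ : X → Y → ℝ) (ε : I → Y → ℝ) (ε0 : I → ℝ)
    (η : X → J → ℝ) (η0 : J → ℝ)
    (πt : I → J → ℝ)
    (hpos : ∀ i j, 0 ≤ πt i j)
    (hrow : ∀ i, ∑ j, πt i j ≤ 1)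
    (hcol : ∀ j, ∑ i, πt i j ≤ 1)
    (hopt : ∀ σ : I → J → ℝ,
      (∀ i j, 0 ≤ σ i j) → (∀ i, ∑ j, σ i j ≤ 1) → (∀ j, ∑ i, σ i j ≤ 1) →
      ∑ i, ∑ j, σ i j * ((Φ (xm i) (ym j) + ε i (ym j) + η (xm i) j) - ε0 i - η0 j) ≤
        ∑ i, ∑ j, πt i j * ((Φ (xm i) (ym j) + ε i (ym j) + η (xm i) j) - ε0 i - η0 j)) :
    -- the aggregated variables are feasible for the type-aggregated LP …
    (∀ i y, 0 ≤ ∑ j ∈ univ.filter (fun j => ym j = y), πt i j) ∧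
    (∀ i, 0 ≤ 1 - ∑ j, πt i j) ∧
    (∀ x j, 0 ≤ ∑ i ∈ univ.filter (fun i => xm i = x), πt i j) ∧
    (∀ j, 0 ≤ 1 - ∑ i, πt i j) ∧
    (∀ i, (1 - ∑ j, πt i j) + ∑ y, ∑ j ∈ univ.filter (fun j => ym j = y), πt i j = 1) ∧
    (∀ j, (1 - ∑ i, πt i j) + ∑ x, ∑ i ∈ univ.filter (fun i => xm i = x), πt i j = 1) ∧
    (∀ x y, ∑ i ∈ univ.filter (fun i => xm i = x), ∑ j ∈ univ.filter (fun j => ym j = y), πt i j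
      = ∑ j ∈ univ.filter (fun j => ym j = y), ∑ i ∈ univ.filter (fun i => xm i = x), πt i j) ∧
    -- … and maximize the type-aggregated objective over all feasible points
    (∀ (a : I → Y → ℝ) (a0 : I → ℝ) (b : X → J → ℝ) (b0 : J → ℝ),
      (∀ i y, 0 ≤ a i y) → (∀ i, 0 ≤ a0 i) → (∀ x j, 0 ≤ b x j) → (∀ j, 0 ≤ b0 j) →
      (∀ i, a0 i + ∑ y, a i y = 1) → (∀ j, b0 j + ∑ x, b x j = 1) →
      (∀ x y, ∑ i ∈ univ.filter (fun i => xm i = x), a i y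
        = ∑ j ∈ univ.filter (fun j => ym j = y), b x j) →
      (∑ i, (a0 i * ε0 i + ∑ y, a i y * (Φ (xm i) y / 2 + ε i y))
        + ∑ j, (b0 j * η0 j + ∑ x, b x j * (Φ x (ym j) / 2 + η x j)))
      ≤
      (∑ i, ((1 - ∑ j, πt i j) * ε0 i
          + ∑ y, (∑ j ∈ univ.filter (fun j => ym j = y), πt i j) * (Φ (xm i) y / 2 + ε i y))
        + ∑ j, ((1 - ∑ i, πt i j) * η0 j
          + ∑ x, (∑ i ∈ univ.filter (fun i => xm i = x), πt i j) * (Φ x (ym j) / 2 + η x j)))) := by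
  refine ⟨?_, ?_, ?_, ?_, ?_, ?_, ?_, ?_⟩
  · exact fun i y => Finset.sum_nonneg fun j _ => hpos i j
  · exact fun i => by linarith [hrow i]
  · exact fun x j => Finset.sum_nonneg fun i _ => hpos i j
  · exact fun j => by linarith [hcol j]
  · intro i
    rw [Finset.sum_fiberwise univ ym (fun j => πt i j)]
    ring
  · intro j
    rw [Finset.sum_fiberwise univ xm (fun i => πt i j)]
    ring
  · intro x y
    exact Finset.sum_comm
  · intro a a0 b b0 ha ha0 hb hb0 haeq hbeq hbal
    -- total mass of type pair (x, y)
    set μ : X → Y → ℝ := fun x y => ∑ i ∈ univ.filter (fun i => xm i = x), a i y with hμ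
    have hμnn : ∀ x y, 0 ≤ μ x y := fun x y => Finset.sum_nonneg fun i _ => ha i y
    -- the disaggregated matching
    set σ : I → J → ℝ := fun i j => a i (ym j) * b (xm i) j / μ (xm i) (ym j) with hσ
    have hσnn : ∀ i j, 0 ≤ σ i j := fun i j =>
      div_nonneg (mul_nonneg (ha _ _) (hb _ _)) (hμnn _ _)
    have ha_le : ∀ i y, a i y ≤ μ (xm i) y := by
      intro i y
      refine Finset.single_le_sum (fun i' _ => ha i' y) ?_
      simp
    have hb_le : ∀ x j, b x j ≤ μ x (ym j) := by
      intro x j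
      rw [hμ]
      simp only
      rw [hbal x (ym j)]
      refine Finset.single_le_sum (fun j' _ => hb x j') ?_
      simp
    -- row fibers of σ recover a
    have hA : ∀ i y, ∑ j ∈ univ.filter (fun j => ym j = y), σ i j = a i y := by
      intro i y
      have step : ∑ j ∈ univ.filter (fun j => ym j = y), σ i j
          = a i y / μ (xm i) y * ∑ j ∈ univ.filter (fun j => ym j = y), b (xm i) j := by
        rw [Finset.mul_sum]
        refine Finset.sum_congr rfl fun j hj => ?_
        rw [hσ]
        simp only
        rw [(Finset.mem_filter.mp hj).2, mul_div_right_comm]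
      have hfil : (∑ i' ∈ univ.filter (fun i' => xm i' = xm i), a i' y) = μ (xm i) y := rfl
      rw [step, ← hbal (xm i) y, hfil]
      rcases eq_or_lt_of_le (hμnn (xm i) y) with h0 | h0
      · have haz : a i y = 0 := le_antisymm (by simpa [← h0] using ha_le i y) (ha i y)
        simp [haz]
      · exact div_mul_cancel₀ _ (ne_of_gt h0)
    -- column fibers of σ recover b
    have hB : ∀ x j, ∑ i ∈ univ.filter (fun i => xm i = x), σ i j = b x j := by
      intro x j
      have step : ∑ i ∈ univ.filter (fun i => xm i = x), σ i j
          = b x j / μ x (ym j) * ∑ i ∈ univ.filter (fun i => xm i = x), a i (ym j) := by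
        rw [Finset.mul_sum]
        refine Finset.sum_congr rfl fun i hi => ?_
        rw [hσ]
        simp only
        rw [(Finset.mem_filter.mp hi).2, mul_comm (a i (ym j)), mul_div_right_comm]
      have hfil : (∑ i ∈ univ.filter (fun i => xm i = x), a i (ym j)) = μ x (ym j) := rfl
      rw [step, hfil]
      rcases eq_or_lt_of_le (hμnn x (ym j)) with h0 | h0
      · have hbz : b x j = 0 := le_antisymm (by simpa [← h0] using hb_le x j) (hb x j)
        simp [hbz]
      · exact div_mul_cancel₀ _ (ne_of_gt h0)
    -- marginals of σ
    have hrowσ : ∀ i, ∑ j, σ i j = ∑ y, a i y := by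
      intro i
      rw [← Finset.sum_fiberwise univ ym (fun j => σ i j)]
      exact Finset.sum_congr rfl fun y _ => hA i y
    have hcolσ : ∀ j, ∑ i, σ i j = ∑ x, b x j := by
      intro j
      rw [← Finset.sum_fiberwise univ xm (fun i => σ i j)]
      exact Finset.sum_congr rfl fun x _ => hB x j
    have hrowσ1 : ∀ i, ∑ j, σ i j ≤ 1 := fun i => by
      rw [hrowσ i]; linarith [haeq i, ha0 i]
    have hcolσ1 : ∀ j, ∑ i, σ i j ≤ 1 := fun j => by
      rw [hcolσ j]; linarith [hbeq j, hb0 j]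
    -- rewrite both objectives via the accounting identity
    have eπ := agg_obj_eq xm ym Φ ε ε0 η η0 πt
      (fun i y => ∑ j ∈ univ.filter (fun j => ym j = y), πt i j)
      (fun x j => ∑ i ∈ univ.filter (fun i => xm i = x), πt i j)
      (fun _ _ => rfl) (fun _ _ => rfl)
    have eσ := agg_obj_eq xm ym Φ ε ε0 η η0 σ a b hA hB
    have ha0' : ∀ i, a0 i = 1 - ∑ j, σ i j := fun i => by
      rw [hrowσ i]; linarith [haeq i]
    have hb0' : ∀ j, b0 j = 1 - ∑ i, σ i j := fun j => by
      rw [hcolσ j]; linarith [hbeq j]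
    have lhs_eq : ∑ i, (a0 i * ε0 i + ∑ y, a i y * (Φ (xm i) y / 2 + ε i y))
        + ∑ j, (b0 j * η0 j + ∑ x, b x j * (Φ x (ym j) / 2 + η x j))
        = (∑ i, ∑ j, σ i j * ((Φ (xm i) (ym j) + ε i (ym j) + η (xm i) j) - ε0 i - η0 j))
          + ∑ i, ε0 i + ∑ j, η0 j := by
      rw [← eσ]
      congr 1
      · exact Finset.sum_congr rfl fun i _ => by rw [ha0' i]
      · exact Finset.sum_congr rfl fun j _ => by rw [hb0' j]
    rw [lhs_eq, eπ]
    have := hopt σ hσnn hrowσ1 hcolσ1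
    linarith
end

section
/- With notation as in the aggregation setting, if π = (π_{iy}, π_{i0}, π_{xj}, π_{0j}) is a feasible solution of the type-aggregated linear program (satisfying π_{i0} + Σ_y π_{iy} = 1, π_{0j} + Σ_x π_{xj} = 1, and the balance conditions Σ_{i : x_i = x} π_{iy} = Σ_{j : y_j = y} π_{xj} for all x, y), then there exists a nonnegative matrix π̃ : I × J → ℝ≥0 with Σ_{j : y_j = y} π̃_{ij} = π_{iy} for all i, y and Σ_{i : x_i = x} π̃_{ij} = π_{xj} for all x, j; moreover any such π̃ satisfies Σ_j π̃_{ij} ≤ 1 for all i and Σ_i π̃_{ij} ≤ 1 for all j. -/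
/-!
Within each pair of types `(x, y)` the balance condition says that the row masses `a i y`
(`xm i = x`) and the column masses `b x j` (`ym j = y`) have the same total `S x y`, so the
independent coupling `a i y * b x j / S x y` disaggregates them; when `S x y = 0` all these masses
vanish and the junk value `/ 0 = 0` is harmless. The individual bounds follow by summing the
type-level constraints fibre by fibre.
-/

open Finset

theorem Finset.sum_mul_div_sum_eq {ι K : Type*} [Field K] (t : Finset ι) (v : ι → K) {c : K}
    (hc : ∑ j ∈ t, v j = 0 → c = 0) : ∑ j ∈ t, c * v j / ∑ j ∈ t, v j = c := by
  by_cases h : ∑ j ∈ t, v j = 0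
  · simp [hc h]
  · rw [← Finset.sum_div, ← Finset.mul_sum, mul_div_cancel_right₀ _ h]

section Disaggregation

variable {I J X Y : Type*} [Fintype I] [DecidableEq X]
  (xm : I → X) (ym : J → Y) (a : I → Y → ℝ) (b : X → J → ℝ)

noncomputable def fiberCoupling (i : I) (j : J) : ℝ :=
  a i (ym j) * b (xm i) j / ∑ i' ∈ univ.filter (fun i' => xm i' = xm i), a i' (ym j)

variable {xm ym a b}

lemma fiberCoupling_nonneg (ha : ∀ i y, 0 ≤ a i y) (hb : ∀ x j, 0 ≤ b x j) (i : I) (j : J) :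
    0 ≤ fiberCoupling xm ym a b i j :=
  div_nonneg (mul_nonneg (ha i _) (hb _ j)) (sum_nonneg fun i' _ => ha i' _)

variable [Fintype J] [DecidableEq Y] (hbal : ∀ x y, ∑ i ∈ univ.filter (fun i => xm i = x), a i y
  = ∑ j ∈ univ.filter (fun j => ym j = y), b x j)
include hbal

lemma sum_fiberCoupling_row (ha : ∀ i y, 0 ≤ a i y) (i : I) (y : Y) :
    ∑ j ∈ univ.filter (fun j => ym j = y), fiberCoupling xm ym a b i j = a i y := by
  calc ∑ j ∈ univ.filter (fun j => ym j = y), fiberCoupling xm ym a b i j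
      = ∑ j ∈ univ.filter (fun j => ym j = y),
          a i y * b (xm i) j / ∑ j' ∈ univ.filter (fun j' => ym j' = y), b (xm i) j' := by
        refine sum_congr rfl fun j hj => ?_
        rw [fiberCoupling, (mem_filter.mp hj).2, hbal]
    _ = a i y := by
        refine sum_mul_div_sum_eq _ _ fun h => ?_
        rw [← hbal] at h
        exact (sum_eq_zero_iff_of_nonneg fun i' _ => ha i' y).mp h i (by simp)

lemma sum_fiberCoupling_col (hb : ∀ x j, 0 ≤ b x j) (x : X) (j : J) :
    ∑ i ∈ univ.filter (fun i => xm i = x), fiberCoupling xm ym a b i j = b x j := by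
  calc ∑ i ∈ univ.filter (fun i => xm i = x), fiberCoupling xm ym a b i j
      = ∑ i ∈ univ.filter (fun i => xm i = x),
          b x j * a i (ym j) / ∑ i' ∈ univ.filter (fun i' => xm i' = x), a i' (ym j) := by
        refine sum_congr rfl fun i hi => ?_
        rw [fiberCoupling, (mem_filter.mp hi).2, mul_comm]
    _ = b x j := by
        refine sum_mul_div_sum_eq _ _ fun h => ?_
        rw [hbal] at h
        exact (sum_eq_zero_iff_of_nonneg fun j' _ => hb x j').mp h j (by simp)

end Disaggregation

lemma sum_le_one_of_fiber_sums {J Y : Type*} [Fintype J] [Fintype Y] [DecidableEq Y]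
    (ym : J → Y) (f : J → ℝ) (c : Y → ℝ) (c0 : ℝ) (hc0 : 0 ≤ c0) (hfeas : c0 + ∑ y, c y = 1)
    (hf : ∀ y, ∑ j ∈ univ.filter (fun j => ym j = y), f j = c y) : ∑ j, f j ≤ 1 := by
  rw [← sum_fiberwise univ ym f]
  simp only [hf]
  linarith

/-- Any feasible point of the type-aggregated LP can be disaggregated
into a nonnegative individual-level matrix, and any such disaggregation satisfies
the individual-level row/column constraints. -/
theorem stmt1
    {I J X Y : Type*} [Fintype I] [Fintype J] [Fintype X] [Fintype Y]
    [DecidableEq X] [DecidableEq Y]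
    (xm : I → X) (ym : J → Y)
    (a : I → Y → ℝ) (a0 : I → ℝ) (b : X → J → ℝ) (b0 : J → ℝ)
    (ha : ∀ i y, 0 ≤ a i y) (ha0 : ∀ i, 0 ≤ a0 i)
    (hb : ∀ x j, 0 ≤ b x j) (hb0 : ∀ j, 0 ≤ b0 j)
    (hfeasI : ∀ i, a0 i + ∑ y, a i y = 1)
    (hfeasJ : ∀ j, b0 j + ∑ x, b x j = 1)
    (hbal : ∀ x y, ∑ i ∈ univ.filter (fun i => xm i = x), a i y
      = ∑ j ∈ univ.filter (fun j => ym j = y), b x j) :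
    (∃ πt : I → J → ℝ, (∀ i j, 0 ≤ πt i j) ∧
      (∀ i y, ∑ j ∈ univ.filter (fun j => ym j = y), πt i j = a i y) ∧
      (∀ x j, ∑ i ∈ univ.filter (fun i => xm i = x), πt i j = b x j)) ∧
    (∀ πt : I → J → ℝ, (∀ i j, 0 ≤ πt i j) →
      (∀ i y, ∑ j ∈ univ.filter (fun j => ym j = y), πt i j = a i y) →
      (∀ x j, ∑ i ∈ univ.filter (fun i => xm i = x), πt i j = b x j) →
      (∀ i, ∑ j, πt i j ≤ 1) ∧ (∀ j, ∑ i, πt i j ≤ 1)) :=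
  ⟨⟨fiberCoupling xm ym a b, fiberCoupling_nonneg ha hb,
      sum_fiberCoupling_row hbal ha, sum_fiberCoupling_col hbal hb⟩,
    fun πt _ hrow hcol =>
      ⟨fun i => sum_le_one_of_fiber_sums ym (πt i) (a i) (a0 i) (ha0 i) (hfeasI i) (hrow i),
        fun j => sum_le_one_of_fiber_sums xm (πt · j) (b · j) (b0 j) (hb0 j) (hfeasJ j)
          (hcol · j)⟩⟩
end

section
/- If RROA terminates, it returns an optimal matching: suppose at some step t the restricted optimal matching π^t with multipliers (u^t, v^t, T^t) satisfies u_i^t ≥ α_{iy} − T_{x_i y}^t for every i and every y ∈ Y \ Y_i^t, and v_j^t ≥ γ_{xj} + T_{x y_j}^t for every j and every x ∈ X \ X_j^t. Then π^t (extended by zeros) is an optimal solution of the unrestricted type-aggregated assignment LP. -/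
/-!
Under the termination condition the restricted multipliers `(u, v, T)` are feasible for the dual
of the unrestricted LP, so by weak duality every feasible matching has value at most
`∑ u + ∑ v`, which is the value of `π^t` by restricted strong duality. Weak duality reduces to
the agent-by-agent bound `value ≤ u_i + transfers`: the transfer terms `T` paid on the `I` side
and received on the `J` side cancel because the aggregated masses balance type by type.
-/

open Finset

section WeakDuality

variable {R I J X Y : Type*} [Fintype I] [Fintype J] [Fintype X] [Fintype Y]

theorem sum_sum_mul_comp_eq_sum_fiberwise [NonUnitalNonAssocSemiring R] [DecidableEq X]
    (f : I → X) (w : I → Y → R) (T : X → Y → R) :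
    ∑ i, ∑ y, w i y * T (f i) y
      = ∑ x, ∑ y, (∑ i ∈ univ.filter (fun i => f i = x), w i y) * T x y := by
  rw [← sum_fiberwise univ f (fun i => ∑ y, w i y * T (f i) y)]
  refine sum_congr rfl fun x _ => ?_
  rw [sum_comm]
  refine sum_congr rfl fun y _ => ?_
  rw [sum_mul]
  exact sum_congr rfl fun i hi => by rw [(mem_filter.mp hi).2]

theorem sum_transfer_eq_of_balance [NonUnitalNonAssocSemiring R] [DecidableEq X] [DecidableEq Y]
    (xm : I → X) (ym : J → Y) (a : I → Y → R) (b : X → J → R) (T : X → Y → R)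
    (hbal : ∀ x y, ∑ i ∈ univ.filter (fun i => xm i = x), a i y
      = ∑ j ∈ univ.filter (fun j => ym j = y), b x j) :
    ∑ i, ∑ y, a i y * T (xm i) y = ∑ j, ∑ x, b x j * T x (ym j) := by
  rw [sum_sum_mul_comp_eq_sum_fiberwise xm a T,
    sum_sum_mul_comp_eq_sum_fiberwise ym (fun j x => b x j) (fun y x => T x y), sum_comm]
  simp only [hbal]

theorem mul_add_sum_mul_le_of_add_sum_eq_one [CommRing R] [PartialOrder R] [IsOrderedRing R]
    (p0 e0 u : R) (p c t : Y → R)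
    (hp0 : 0 ≤ p0) (hp : ∀ y, 0 ≤ p y) (hsum : p0 + ∑ y, p y = 1)
    (he0 : e0 ≤ u) (hc : ∀ y, c y ≤ u + t y) :
    p0 * e0 + ∑ y, p y * c y ≤ u + ∑ y, p y * t y := by
  calc p0 * e0 + ∑ y, p y * c y
      ≤ p0 * u + ∑ y, p y * (u + t y) := by
        gcongr with y
        · exact hp y
        · exact hc y
    _ = (p0 + ∑ y, p y) * u + ∑ y, p y * t y := by
        simp only [mul_add, sum_add_distrib, ← sum_mul]; ring
    _ = u + ∑ y, p y * t y := by rw [hsum, one_mul]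

theorem assignment_weak_duality [CommRing R] [LinearOrder R] [IsStrictOrderedRing R]
    [DecidableEq X] [DecidableEq Y] (xm : I → X) (ym : J → Y)
    (ε0 : I → R) (η0 : J → R) (α : I → Y → R) (γ : X → J → R)
    (a : I → Y → R) (a0 : I → R) (b : X → J → R) (b0 : J → R)
    (ha : ∀ i y, 0 ≤ a i y) (ha0 : ∀ i, 0 ≤ a0 i)
    (hb : ∀ x j, 0 ≤ b x j) (hb0 : ∀ j, 0 ≤ b0 j)
    (hfeasI : ∀ i, a0 i + ∑ y, a i y = 1) (hfeasJ : ∀ j, b0 j + ∑ x, b x j = 1)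
    (hbal : ∀ x y, ∑ i ∈ univ.filter (fun i => xm i = x), a i y
      = ∑ j ∈ univ.filter (fun j => ym j = y), b x j)
    (u : I → R) (v : J → R) (T : X → Y → R)
    (hu0 : ∀ i, ε0 i ≤ u i) (hv0 : ∀ j, η0 j ≤ v j)
    (hu : ∀ i y, α i y - T (xm i) y ≤ u i) (hv : ∀ j x, γ x j + T x (ym j) ≤ v j) :
    ∑ i, (a0 i * ε0 i + ∑ y, a i y * α i y) + ∑ j, (b0 j * η0 j + ∑ x, b x j * γ x j)
      ≤ ∑ i, u i + ∑ j, v j := by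
  have hI : ∑ i, (a0 i * ε0 i + ∑ y, a i y * α i y)
      ≤ ∑ i, (u i + ∑ y, a i y * T (xm i) y) :=
    sum_le_sum fun i _ => mul_add_sum_mul_le_of_add_sum_eq_one _ _ _ _ _ _
      (ha0 i) (ha i) (hfeasI i) (hu0 i) fun y => by linarith [hu i y]
  have hJ : ∑ j, (b0 j * η0 j + ∑ x, b x j * γ x j)
      ≤ ∑ j, (v j + ∑ x, b x j * -T x (ym j)) :=
    sum_le_sum fun j _ => mul_add_sum_mul_le_of_add_sum_eq_one _ _ _ _ _ _
      (hb0 j) (fun x => hb x j) (hfeasJ j) (hv0 j) fun x => by linarith [hv j x]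
  have htransfer := sum_transfer_eq_of_balance xm ym a b T hbal
  simp only [sum_add_distrib, mul_neg, sum_neg_distrib] at hI hJ ⊢
  linarith

end WeakDuality

theorem stmt8_general
    {I J X Y : Type*} [Fintype I] [Fintype J] [Fintype X] [Fintype Y]
    [DecidableEq X] [DecidableEq Y]
    (xm : I → X) (ym : J → Y)
    (ε0 : I → ℝ)
    (η0 : J → ℝ)
    (α : I → Y → ℝ) (γ : X → J → ℝ)
    (Yc : I → Finset Y) (Xc : J → Finset X)
    (a : I → Y → ℝ) (a0 : I → ℝ) (b : X → J → ℝ) (b0 : J → ℝ)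
    -- multipliers: restricted dual feasibility plus strong duality
    (u : I → ℝ) (v : J → ℝ) (T : X → Y → ℝ)
    (hu0 : ∀ i, ε0 i ≤ u i) (hv0 : ∀ j, η0 j ≤ v j)
    (huY : ∀ i, ∀ y ∈ Yc i, α i y - T (xm i) y ≤ u i)
    (hvX : ∀ j, ∀ x ∈ Xc j, γ x j + T x (ym j) ≤ v j)
    (hstrong : ∑ i, u i + ∑ j, v j
      = ∑ i, (a0 i * ε0 i + ∑ y, a i y * α i y)
        + ∑ j, (b0 j * η0 j + ∑ x, b x j * γ x j))
    -- termination condition: dual inequalities hold outside the choice sets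
    (htermI : ∀ i, ∀ y, y ∉ Yc i → α i y - T (xm i) y ≤ u i)
    (htermJ : ∀ j, ∀ x, x ∉ Xc j → γ x j + T x (ym j) ≤ v j) :
    -- conclusion: π^t is optimal for the unrestricted LP
    ∀ (a' : I → Y → ℝ) (a0' : I → ℝ) (b' : X → J → ℝ) (b0' : J → ℝ),
      (∀ i y, 0 ≤ a' i y) → (∀ i, 0 ≤ a0' i) → (∀ x j, 0 ≤ b' x j) → (∀ j, 0 ≤ b0' j) →
      (∀ i, a0' i + ∑ y, a' i y = 1) → (∀ j, b0' j + ∑ x, b' x j = 1) →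
      (∀ x y, ∑ i ∈ univ.filter (fun i => xm i = x), a' i y
        = ∑ j ∈ univ.filter (fun j => ym j = y), b' x j) →
      ∑ i, (a0' i * ε0 i + ∑ y, a' i y * α i y)
        + ∑ j, (b0' j * η0 j + ∑ x, b' x j * γ x j)
      ≤ ∑ i, (a0 i * ε0 i + ∑ y, a i y * α i y)
        + ∑ j, (b0 j * η0 j + ∑ x, b x j * γ x j) := by
  intro a' a0' b' b0' ha' ha0' hb' hb0' hfeasI' hfeasJ' hbal'
  have hu : ∀ i y, α i y - T (xm i) y ≤ u i := fun i y =>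
    if h : y ∈ Yc i then huY i y h else htermI i y h
  have hv : ∀ j x, γ x j + T x (ym j) ≤ v j := fun j x =>
    if h : x ∈ Xc j then hvX j x h else htermJ j x h
  rw [← hstrong]
  exact assignment_weak_duality xm ym ε0 η0 α γ a' a0' b' b0' ha' ha0' hb' hb0'
    hfeasI' hfeasJ' hbal' u v T hu0 hv0 hu hv

/-- If the RROA termination condition holds (the restricted dual
multipliers satisfy the dual inequalities also outside the choice sets), then the
restricted optimal matching, extended by zeros, solves the unrestricted
type-aggregated assignment LP. -/
theorem stmt8
    {I J X Y : Type*} [Fintype I] [Fintype J] [Fintype X] [Fintype Y]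
    [DecidableEq X] [DecidableEq Y]
    (xm : I → X) (ym : J → Y)
    (Φ : X → Y → ℝ) (ε : I → Y → ℝ) (ε0 : I → ℝ)
    (η : X → J → ℝ) (η0 : J → ℝ)
    (α : I → Y → ℝ) (γ : X → J → ℝ)
    (hα : ∀ i y, α i y = Φ (xm i) y / 2 + ε i y)
    (hγ : ∀ x j, γ x j = Φ x (ym j) / 2 + η x j)
    (Yc : I → Finset Y) (Xc : J → Finset X)
    -- π^t is feasible for the restricted LP (zero outside the choice sets)
    (a : I → Y → ℝ) (a0 : I → ℝ) (b : X → J → ℝ) (b0 : J → ℝ)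
    (ha : ∀ i y, 0 ≤ a i y) (ha0 : ∀ i, 0 ≤ a0 i)
    (hb : ∀ x j, 0 ≤ b x j) (hb0 : ∀ j, 0 ≤ b0 j)
    (haY : ∀ i y, y ∉ Yc i → a i y = 0)
    (hbX : ∀ j x, x ∉ Xc j → b x j = 0)
    (hfeasI : ∀ i, a0 i + ∑ y, a i y = 1)
    (hfeasJ : ∀ j, b0 j + ∑ x, b x j = 1)
    (hbal : ∀ x y, ∑ i ∈ univ.filter (fun i => xm i = x), a i y
      = ∑ j ∈ univ.filter (fun j => ym j = y), b x j)
    -- multipliers: restricted dual feasibility plus strong duality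
    (u : I → ℝ) (v : J → ℝ) (T : X → Y → ℝ)
    (hu0 : ∀ i, ε0 i ≤ u i) (hv0 : ∀ j, η0 j ≤ v j)
    (huY : ∀ i, ∀ y ∈ Yc i, α i y - T (xm i) y ≤ u i)
    (hvX : ∀ j, ∀ x ∈ Xc j, γ x j + T x (ym j) ≤ v j)
    (hstrong : ∑ i, u i + ∑ j, v j
      = ∑ i, (a0 i * ε0 i + ∑ y, a i y * α i y)
        + ∑ j, (b0 j * η0 j + ∑ x, b x j * γ x j))
    -- termination condition: dual inequalities hold outside the choice sets
    (htermI : ∀ i, ∀ y, y ∉ Yc i → α i y - T (xm i) y ≤ u i)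
    (htermJ : ∀ j, ∀ x, x ∉ Xc j → γ x j + T x (ym j) ≤ v j) :
    -- conclusion: π^t is optimal for the unrestricted LP
    ∀ (a' : I → Y → ℝ) (a0' : I → ℝ) (b' : X → J → ℝ) (b0' : J → ℝ),
      (∀ i y, 0 ≤ a' i y) → (∀ i, 0 ≤ a0' i) → (∀ x j, 0 ≤ b' x j) → (∀ j, 0 ≤ b0' j) →
      (∀ i, a0' i + ∑ y, a' i y = 1) → (∀ j, b0' j + ∑ x, b' x j = 1) →
      (∀ x y, ∑ i ∈ univ.filter (fun i => xm i = x), a' i y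
        = ∑ j ∈ univ.filter (fun j => ym j = y), b' x j) →
      ∑ i, (a0' i * ε0 i + ∑ y, a' i y * α i y)
        + ∑ j, (b0' j * η0 j + ∑ x, b' x j * γ x j)
      ≤ ∑ i, (a0 i * ε0 i + ∑ y, a i y * α i y)
        + ∑ j, (b0 j * η0 j + ∑ x, b x j * γ x j) :=
  stmt8_general xm ym ε0 η0 α γ Yc Xc a a0 b b0 u v T hu0 hv0 huY hvX hstrong htermI htermJ
end

section
/- Collapsing the simulated social surplus into a single LP: given simulated draws (ε_i)_{i∈I} and (η_j)_{j∈J}, the two-level optimization W(Φ) = max over aggregate matchings μ ≥ 0 with Σ_y μ_{xy} ≤ n_x and Σ_x μ_{xy} ≤ m_y of [Σ_{xy} μ_{xy} Φ_{xy} + Ê(μ)], where Ê(μ) is the simulated entropy (the maximum over individual assignments π consistent with μ of the total idiosyncratic utility), equals the value of the single type-aggregated optimal assignment LP: max Σ_i [π_{i0} ε_{i0} + Σ_y π_{iy} α_{iy}] + Σ_j [π_{0j} η_{0j} + Σ_x π_{xj} γ_{xj}] subject to π_{i0} + Σ_y π_{iy} = 1, π_{0j} + Σ_x π_{xj} = 1,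 Σ_{i: x_i=x} π_{iy} = Σ_{j: y_j=y} π_{xj}, where α_{iy} = Φ_{x_i y}/2 + ε_{iy} and γ_{xj} = Φ_{x y_j}/2 + η_{xj}. -/
/-!
Both programs range over the same individual assignments `(a, a0, b, b0)`. Consistency forces
`μ x y` to be the mass of type-`x` women matched to type-`y` men, counted from either side, so
`μ` is determined by the assignment, and its margin bounds follow from each woman and man being
matched at most once. Splitting `μ x y Φ x y` evenly between the two sides of the market turns
`⟨μ, Φ⟩` into the `Φ / 2` shares of the individual surpluses `α` and `γ`; hence the two sets of
attainable values coincide.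
-/

open Finset

theorem sum_sum_mul_comp_eq_sum_sum_fiberwise {I X Y R : Type*} [Fintype I] [Fintype X]
    [Fintype Y] [DecidableEq X] [CommSemiring R] (xm : I → X) (f : I → Y → R)
    (g : X → Y → R) :
    ∑ i, ∑ y, f i y * g (xm i) y
      = ∑ x, ∑ y, (∑ i ∈ univ.filter (fun i => xm i = x), f i y) * g x y := by
  rw [← sum_fiberwise univ xm]
  refine sum_congr rfl fun x _ => ?_
  rw [sum_comm]
  refine sum_congr rfl fun y _ => ?_
  rw [sum_mul]
  exact sum_congr rfl fun i hi => by rw [(mem_filter.mp hi).2]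

theorem sum_sum_le_card_of_sum_le_one {I Y : Type*} [Fintype Y] {a : I → Y → ℝ}
    (s : Finset I) (ha : ∀ i, ∑ y, a i y ≤ 1) :
    ∑ y, ∑ i ∈ s, a i y ≤ (s.card : ℝ) := by
  rw [sum_comm, card_eq_sum_ones, Nat.cast_sum, Nat.cast_one]
  exact sum_le_sum fun i _ => ha i

theorem surplus_eq_of_marginals {I J X Y : Type*} [Fintype I] [Fintype J] [Fintype X]
    [Fintype Y] [DecidableEq X] [DecidableEq Y] (xm : I → X) (ym : J → Y)
    (Φ : X → Y → ℝ) (ε : I → Y → ℝ) (ε0 : I → ℝ) (η : X → J → ℝ) (η0 : J → ℝ)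
    {μ : X → Y → ℝ} {a : I → Y → ℝ} {a0 : I → ℝ} {b : X → J → ℝ} {b0 : J → ℝ}
    (hμa : ∀ x y, ∑ i ∈ univ.filter (fun i => xm i = x), a i y = μ x y)
    (hμb : ∀ x y, ∑ j ∈ univ.filter (fun j => ym j = y), b x j = μ x y) :
    ∑ x, ∑ y, μ x y * Φ x y
        + (∑ i, (a0 i * ε0 i + ∑ y, a i y * ε i y)
          + ∑ j, (b0 j * η0 j + ∑ x, b x j * η x j))
      = ∑ i, (a0 i * ε0 i + ∑ y, a i y * (Φ (xm i) y / 2 + ε i y))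
        + ∑ j, (b0 j * η0 j + ∑ x, b x j * (Φ x (ym j) / 2 + η x j)) := by
  have hshare : ∑ x, ∑ y, μ x y * Φ x y
      = ∑ i, ∑ y, a i y * (Φ (xm i) y / 2) + ∑ j, ∑ x, b x j * (Φ x (ym j) / 2) := by
    rw [sum_sum_mul_comp_eq_sum_sum_fiberwise xm a (fun x y => Φ x y / 2),
      sum_sum_mul_comp_eq_sum_sum_fiberwise ym (fun j x => b x j) (fun y x => Φ x y / 2),
      sum_comm (f := fun y x => (∑ j ∈ univ.filter (fun j => ym j = y), b x j) * (Φ x y / 2)),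
      ← sum_add_distrib]
    refine sum_congr rfl fun x _ => ?_
    rw [← sum_add_distrib]
    refine sum_congr rfl fun y _ => ?_
    rw [hμa, hμb]
    ring
  rw [hshare]
  simp only [mul_add, sum_add_distrib]
  ring

/-- The two-level optimization defining the simulated social surplus
(outer maximization over aggregate matchings μ of ⟨μ, Φ⟩ plus the simulated
entropy, an inner LP) has the same value as the single type-aggregated optimal
assignment LP. -/
theorem stmt12
    {I J X Y : Type*} [Fintype I] [Fintype J] [Fintype X] [Fintype Y]
    [DecidableEq X] [DecidableEq Y]
    (xm : I → X) (ym : J → Y)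
    (Φ : X → Y → ℝ) (ε : I → Y → ℝ) (ε0 : I → ℝ)
    (η : X → J → ℝ) (η0 : J → ℝ) :
    sSup {r : ℝ | ∃ (μ : X → Y → ℝ)
        (a : I → Y → ℝ) (a0 : I → ℝ) (b : X → J → ℝ) (b0 : J → ℝ),
      (∀ x y, 0 ≤ μ x y) ∧
      (∀ x, ∑ y, μ x y ≤ ((univ.filter (fun i => xm i = x)).card : ℝ)) ∧
      (∀ y, ∑ x, μ x y ≤ ((univ.filter (fun j => ym j = y)).card : ℝ)) ∧
      (∀ i y, 0 ≤ a i y) ∧ (∀ i, 0 ≤ a0 i) ∧ (∀ x j, 0 ≤ b x j) ∧ (∀ j, 0 ≤ b0 j) ∧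
      (∀ i, a0 i + ∑ y, a i y = 1) ∧ (∀ j, b0 j + ∑ x, b x j = 1) ∧
      (∀ x y, ∑ i ∈ univ.filter (fun i => xm i = x), a i y = μ x y) ∧
      (∀ x y, ∑ j ∈ univ.filter (fun j => ym j = y), b x j = μ x y) ∧
      r = ∑ x, ∑ y, μ x y * Φ x y
        + (∑ i, (a0 i * ε0 i + ∑ y, a i y * ε i y)
          + ∑ j, (b0 j * η0 j + ∑ x, b x j * η x j))}
    =
    sSup {r : ℝ | ∃ (a : I → Y → ℝ) (a0 : I → ℝ) (b : X → J → ℝ) (b0 : J → ℝ),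
      (∀ i y, 0 ≤ a i y) ∧ (∀ i, 0 ≤ a0 i) ∧ (∀ x j, 0 ≤ b x j) ∧ (∀ j, 0 ≤ b0 j) ∧
      (∀ i, a0 i + ∑ y, a i y = 1) ∧ (∀ j, b0 j + ∑ x, b x j = 1) ∧
      (∀ x y, ∑ i ∈ univ.filter (fun i => xm i = x), a i y
        = ∑ j ∈ univ.filter (fun j => ym j = y), b x j) ∧
      r = ∑ i, (a0 i * ε0 i + ∑ y, a i y * (Φ (xm i) y / 2 + ε i y))
        + ∑ j, (b0 j * η0 j + ∑ x, b x j * (Φ x (ym j) / 2 + η x j))} := by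
  congr 1
  ext r
  constructor
  · rintro ⟨μ, a, a0, b, b0, -, -, -, ha, ha0, hb, hb0, hsa, hsb, hμa, hμb, rfl⟩
    exact ⟨a, a0, b, b0, ha, ha0, hb, hb0, hsa, hsb, fun x y => (hμa x y).trans (hμb x y).symm,
      surplus_eq_of_marginals xm ym Φ ε ε0 η η0 hμa hμb⟩
  · rintro ⟨a, a0, b, b0, ha, ha0, hb, hb0, hsa, hsb, hcons, rfl⟩
    set μ : X → Y → ℝ := fun x y => ∑ i ∈ univ.filter (fun i => xm i = x), a i y
    have hμb : ∀ x y, ∑ j ∈ univ.filter (fun j => ym j = y), b x j = μ x y :=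
      fun x y => (hcons x y).symm
    refine ⟨μ, a, a0, b, b0, fun x y => sum_nonneg fun i _ => ha i y, fun x => ?_, fun y => ?_,
      ha, ha0, hb, hb0, hsa, hsb, fun _ _ => rfl, hμb,
      (surplus_eq_of_marginals xm ym Φ ε ε0 η η0 (fun _ _ => rfl) hμb).symm⟩
    · exact sum_sum_le_card_of_sum_le_one _ fun i => by linarith [ha0 i, hsa i]
    · simp only [← hμb]
      exact sum_sum_le_card_of_sum_le_one (a := fun j x => b x j) _
        fun j => by linarith [hb0 j, hsb j]
end
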